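/- arXiv:2206.08449 — 10 statements merged into one kernel-verified Lean document; each statement's English description precedes it below -/
import Mathlib

section
/- For all real numbers θ₁, θ₂ with 0 ≤ θ₁ ≤ π/2 and 0 ≤ θ₂ ≤ π/2, and every real number r with 0 ≤ r ≤ 1, one has |arcsin √(r·sin²θ₁) − arcsin √(r·sin²θ₂)| ≤ |θ₁ − θ₂|. (Paper's Lemma 1.) -/
/-!
Since `√(r sin² θ) = |√r sin θ|` and `arcsin |x| = |arcsin x|`, it suffices that
`θ ↦ arcsin (a sin θ)` is `1`-Lipschitz on all of `ℝ` for `|a| ≤ 1`. For `|a| < 1` this is the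
derivative bound `|a cos θ| ≤ √(1 - a² sin² θ)`, i.e. `a² ≤ 1`; the case `|a| = 1` follows by
continuity in `a`.
-/

open Real

namespace Real

theorem arcsin_abs (x : ℝ) : arcsin |x| = |arcsin x| := by
  rcases le_total 0 x with hx | hx
  · rw [abs_of_nonneg hx, abs_of_nonneg (arcsin_nonneg.2 hx)]
  · rw [abs_of_nonpos hx, abs_of_nonpos (arcsin_nonpos.2 hx), arcsin_neg]

theorem hasDerivAt_arcsin_mul_sin {a : ℝ} (ha : |a| < 1) (θ : ℝ) :
    HasDerivAt (fun θ ↦ arcsin (a * sin θ))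
      (1 / √(1 - (a * sin θ) ^ 2) * (a * cos θ)) θ := by
  have hlt : |a * sin θ| < 1 := by
    rw [abs_mul]
    exact mul_lt_one_of_nonneg_of_lt_one_left (abs_nonneg a) ha (abs_sin_le_one θ)
  obtain ⟨hneg, hpos⟩ := abs_lt.1 hlt
  exact (hasDerivAt_arcsin hneg.ne' hpos.ne).comp θ ((hasDerivAt_sin θ).const_mul a)

theorem lipschitzWith_arcsin_mul_sin_of_abs_lt_one {a : ℝ} (ha : |a| < 1) :
    LipschitzWith 1 (fun θ ↦ arcsin (a * sin θ)) := by
  refine lipschitzWith_of_nnnorm_deriv_le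
    (fun θ ↦ (hasDerivAt_arcsin_mul_sin ha θ).differentiableAt) fun θ ↦ ?_
  rw [← NNReal.coe_le_coe, coe_nnnorm, (hasDerivAt_arcsin_mul_sin ha θ).deriv, NNReal.coe_one,
    norm_eq_abs]
  have ha2 : a ^ 2 < 1 := (sq_lt_one_iff_abs_lt_one a).2 ha
  have hrad : 0 < 1 - (a * sin θ) ^ 2 := by
    nlinarith [sin_sq_le_one θ, sq_nonneg (sin θ)]
  have hcos : |a * cos θ| ≤ √(1 - (a * sin θ) ^ 2) :=
    abs_le_sqrt (by nlinarith [sin_sq_add_cos_sq θ, sq_nonneg (a * cos θ)])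
  rw [one_div_mul_eq_div, abs_div, abs_of_pos (sqrt_pos.2 hrad)]
  exact div_le_one_of_le₀ hcos (sqrt_nonneg _)

theorem lipschitzWith_arcsin_mul_sin {a : ℝ} (ha : |a| ≤ 1) :
    LipschitzWith 1 (fun θ ↦ arcsin (a * sin θ)) := by
  refine LipschitzWith.of_dist_le_mul fun x y ↦ ?_
  have hclosed :
      IsClosed {b : ℝ | dist (arcsin (b * sin x)) (arcsin (b * sin y)) ≤ 1 * dist x y} :=
    isClosed_le (by fun_prop) continuous_const
  have hIoo :
      Set.Ioo (-1) 1 ⊆ {b : ℝ | dist (arcsin (b * sin x)) (arcsin (b * sin y)) ≤ 1 * dist x y} :=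
    fun b hb ↦ (lipschitzWith_arcsin_mul_sin_of_abs_lt_one (abs_lt.2 hb)).dist_le_mul x y
  have hIcc := hclosed.closure_subset_iff.2 hIoo
  rw [closure_Ioo (by norm_num)] at hIcc
  exact hIcc (abs_le.1 ha)

end Real

theorem arcsin_sqrt_mul_sin_sq_contract_general
    (θ₁ θ₂ r : ℝ)
    (hr' : r ≤ 1) :
    |arcsin (Real.sqrt (r * (Real.sin θ₁) ^ 2)) -
      arcsin (Real.sqrt (r * (Real.sin θ₂) ^ 2))| ≤ |θ₁ - θ₂| := by
  have hsqrt : ∀ θ, √(r * sin θ ^ 2) = |√r * sin θ| := fun θ ↦ by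
    rw [sqrt_mul' r (sq_nonneg _), sqrt_sq_eq_abs, abs_mul, abs_of_nonneg (sqrt_nonneg r)]
  have hlip := lipschitzWith_arcsin_mul_sin (a := √r)
    (by rw [abs_of_nonneg (sqrt_nonneg r)]; exact sqrt_le_one.2 hr')
  rw [hsqrt, hsqrt, arcsin_abs, arcsin_abs]
  refine (abs_abs_sub_abs_le_abs_sub _ _).trans ?_
  simpa [dist_eq_norm] using hlip.dist_le_mul θ₁ θ₂

theorem arcsin_sqrt_mul_sin_sq_contract
    (θ₁ θ₂ r : ℝ)
    (hθ₁ : 0 ≤ θ₁) (hθ₁' : θ₁ ≤ π / 2)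
    (hθ₂ : 0 ≤ θ₂) (hθ₂' : θ₂ ≤ π / 2)
    (hr : 0 ≤ r) (hr' : r ≤ 1) :
    |arcsin (Real.sqrt (r * (Real.sin θ₁) ^ 2)) -
      arcsin (Real.sqrt (r * (Real.sin θ₂) ^ 2))| ≤ |θ₁ - θ₂| :=
  arcsin_sqrt_mul_sin_sq_contract_general θ₁ θ₂ r hr'
end

section
/- For all real numbers θ₁, θ₂ with 0 ≤ θ₁ ≤ π/2 and 0 ≤ θ₂ ≤ π/2, and every real number s ≥ 1 satisfying s·sin²θ₁ ≤ 1/2 and s·sin²θ₂ ≤ 1/2, one has |arcsin √(s·sin²θ₁) − arcsin √(s·sin²θ₂)| ≤ √(2s)·|θ₁ − θ₂|. (Paper's Lemma 2.) -/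
open Real Set

/-! The map `θ ↦ √(s sin² θ) = √s |sin θ|` is `√s`-Lipschitz, and on `[-1/√2, 1/√2]`, where
the hypotheses confine its values, `arcsin` has derivative `1/√(1 - x²) ≤ √2`. -/

lemma abs_arcsin_sub_arcsin_le {M x y : ℝ} (hM : M < 1) (hx : x ∈ Icc (-M) M)
    (hy : y ∈ Icc (-M) M) :
    |arcsin x - arcsin y| ≤ |x - y| / √(1 - M ^ 2) := by
  have hderiv : ∀ z ∈ Icc (-M) M,
      HasDerivWithinAt arcsin (1 / √(1 - z ^ 2)) (Icc (-M) M) z := fun z hz =>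
    (hasDerivAt_arcsin (by linarith [hz.1]) (by linarith [hz.2])).hasDerivWithinAt
  have hbound : ∀ z ∈ Icc (-M) M, ‖1 / √(1 - z ^ 2)‖ ≤ 1 / √(1 - M ^ 2) := by
    intro z hz
    have hzM : z ^ 2 ≤ M ^ 2 := sq_le_sq' hz.1 hz.2
    have hM2 : M ^ 2 < 1 := by nlinarith [hz.1, hz.2]
    rw [norm_of_nonneg (by positivity)]
    gcongr
  have h := (convex_Icc (-M) M).norm_image_sub_le_of_norm_hasDerivWithin_le hderiv hbound hy hx
  rwa [Real.norm_eq_abs, Real.norm_eq_abs, one_div_mul_eq_div] at h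

lemma abs_sqrt_mul_sin_sq_sub_le (s θ₁ θ₂ : ℝ) :
    |√(s * sin θ₁ ^ 2) - √(s * sin θ₂ ^ 2)| ≤ √s * |θ₁ - θ₂| := by
  simp only [sqrt_mul' s (sq_nonneg _), sqrt_sq_eq_abs, ← mul_sub, abs_mul,
    abs_of_nonneg (sqrt_nonneg s)]
  exact mul_le_mul_of_nonneg_left
    ((abs_abs_sub_abs_le_abs_sub _ _).trans (abs_sin_sub_sin_le _ _)) (sqrt_nonneg s)

lemma sqrt_mem_Icc_of_le_half {x : ℝ} (hx : x ≤ 1 / 2) :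
    √x ∈ Icc (-√(1 / 2)) √(1 / 2) :=
  ⟨by linarith [sqrt_nonneg x, sqrt_nonneg (1 / 2)], sqrt_le_sqrt hx⟩

theorem arcsin_sqrt_mul_sin_sq_stretch_general
    (θ₁ θ₂ s : ℝ)
    (hs₁ : s * (Real.sin θ₁) ^ 2 ≤ 1 / 2)
    (hs₂ : s * (Real.sin θ₂) ^ 2 ≤ 1 / 2) :
    |arcsin (Real.sqrt (s * (Real.sin θ₁) ^ 2)) -
      arcsin (Real.sqrt (s * (Real.sin θ₂) ^ 2))| ≤
      Real.sqrt (2 * s) * |θ₁ - θ₂| := by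
  have hM : √(1 / 2) < 1 := by rw [sqrt_lt' one_pos]; norm_num
  have hM2 : 1 - √(1 / 2) ^ 2 = 1 / 2 := by rw [sq_sqrt (by norm_num)]; norm_num
  calc _ ≤ |√(s * sin θ₁ ^ 2) - √(s * sin θ₂ ^ 2)| / √(1 - √(1 / 2) ^ 2) :=
        abs_arcsin_sub_arcsin_le hM (sqrt_mem_Icc_of_le_half hs₁) (sqrt_mem_Icc_of_le_half hs₂)
    _ ≤ √s * |θ₁ - θ₂| / √(1 / 2) := by
        rw [hM2]
        gcongr
        exact abs_sqrt_mul_sin_sq_sub_le s θ₁ θ₂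
    _ = √(2 * s) * |θ₁ - θ₂| := by
        rw [sqrt_mul zero_le_two, one_div, sqrt_inv, div_inv_eq_mul]
        ring

theorem arcsin_sqrt_mul_sin_sq_stretch
    (θ₁ θ₂ s : ℝ)
    (hθ₁ : 0 ≤ θ₁) (hθ₁' : θ₁ ≤ π / 2)
    (hθ₂ : 0 ≤ θ₂) (hθ₂' : θ₂ ≤ π / 2)
    (hs : 1 ≤ s)
    (hs₁ : s * (Real.sin θ₁) ^ 2 ≤ 1 / 2)
    (hs₂ : s * (Real.sin θ₂) ^ 2 ≤ 1 / 2) :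
    |arcsin (Real.sqrt (s * (Real.sin θ₁) ^ 2)) -
      arcsin (Real.sqrt (s * (Real.sin θ₂) ^ 2))| ≤
      Real.sqrt (2 * s) * |θ₁ - θ₂| :=
  arcsin_sqrt_mul_sin_sq_stretch_general θ₁ θ₂ s hs₁ hs₂
end

section
/- For all real numbers p₁, p₂ with 0 ≤ p₁ ≤ 1 and 0 ≤ p₂ ≤ 1, one has |arcsin √p₁ − arcsin √p₂| ≤ arcsin √(|p₁ − p₂|). (Paper's Lemma 3.) -/
/-!
For `p₂ ≤ p₁` the claim is subadditivity of `t ↦ arcsin √t`. With `a = arcsin √x`, `b = arcsin √y`,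
`cos (a + b) = √((1 - x)(1 - y)) - √(xy) ≤ √(1 - x - y)`, because `(1 - x)(1 - y) = (1 - x - y) + xy` and
the square root is subadditive. As `a + b ∈ [0, π]` and `arccos` is antitone, this gives
`arcsin √(x + y) = arccos √(1 - x - y) ≤ a + b`.
-/

open Real

namespace Real

lemma sqrt_add_le_add_sqrt {x y : ℝ} (hx : 0 ≤ x) (hy : 0 ≤ y) : √(x + y) ≤ √x + √y := by
  rw [sqrt_le_iff]
  refine ⟨by positivity, ?_⟩
  nlinarith [sq_sqrt hx, sq_sqrt hy, sqrt_nonneg x, sqrt_nonneg y]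

lemma cos_arcsin_sqrt {x : ℝ} (hx : 0 ≤ x) : cos (arcsin √x) = √(1 - x) := by
  rw [cos_arcsin, sq_sqrt hx]

lemma arcsin_sqrt_add_le {x y : ℝ} (hx : 0 ≤ x) (hy : 0 ≤ y) (hxy : x + y ≤ 1) :
    arcsin √(x + y) ≤ arcsin √x + arcsin √y := by
  have hcos : cos (arcsin √x + arcsin √y) ≤ √(1 - (x + y)) := calc
    cos (arcsin √x + arcsin √y) = √((1 - x) * (1 - y)) - √(x * y) := by
      rw [cos_add, cos_arcsin_sqrt hx, cos_arcsin_sqrt hy,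
        sin_arcsin (by linarith [sqrt_nonneg x]) (sqrt_le_one.2 (by linarith)),
        sin_arcsin (by linarith [sqrt_nonneg y]) (sqrt_le_one.2 (by linarith)),
        sqrt_mul (by linarith), sqrt_mul hx]
    _ ≤ √(1 - (x + y)) := by
      have := sqrt_add_le_add_sqrt (by linarith : 0 ≤ 1 - (x + y)) (mul_nonneg hx hy)
      rw [show 1 - (x + y) + x * y = (1 - x) * (1 - y) by ring] at this
      linarith
  have hsum_nonneg : 0 ≤ arcsin √x + arcsin √y :=
    add_nonneg (arcsin_nonneg.2 (sqrt_nonneg x)) (arcsin_nonneg.2 (sqrt_nonneg y))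
  have hsum_le_pi : arcsin √x + arcsin √y ≤ π := by
    linarith [arcsin_le_pi_div_two √x, arcsin_le_pi_div_two √y]
  calc arcsin √(x + y) = arccos √(1 - (x + y)) := by
        rw [arcsin_eq_arccos (sqrt_nonneg _), sq_sqrt (by linarith)]
    _ ≤ arccos (cos (arcsin √x + arcsin √y)) := arccos_le_arccos hcos
    _ = arcsin √x + arcsin √y := arccos_cos hsum_nonneg hsum_le_pi

end Real

theorem abs_arcsin_sqrt_sub_le
    (p₁ p₂ : ℝ)
    (hp₁ : 0 ≤ p₁) (hp₁' : p₁ ≤ 1)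
    (hp₂ : 0 ≤ p₂) (hp₂' : p₂ ≤ 1) :
    |arcsin (Real.sqrt p₁) - arcsin (Real.sqrt p₂)| ≤
      arcsin (Real.sqrt (|p₁ - p₂|)) := by
  wlog h : p₂ ≤ p₁ generalizing p₁ p₂
  · rw [abs_sub_comm, abs_sub_comm p₁]
    exact this p₂ p₁ hp₂ hp₂' hp₁ hp₁' (le_of_not_ge h)
  have hmono : arcsin √p₂ ≤ arcsin √p₁ := monotone_arcsin (sqrt_le_sqrt h)
  have hsubadd := arcsin_sqrt_add_le hp₂ (sub_nonneg.2 h) (by linarith)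
  rw [add_sub_cancel] at hsubadd
  rw [abs_of_nonneg (sub_nonneg.2 hmono), abs_of_nonneg (sub_nonneg.2 h)]
  linarith
end

section
/- Fix real numbers θ₁, θ₂ with 0 ≤ θ₂ ≤ θ₁ ≤ π/2. Then the function g : [0,1] → ℝ defined by g(r) = arcsin √(r·sin²θ₁) − arcsin √(r·sin²θ₂) is monotone nondecreasing on [0,1]; that is, for all 0 ≤ r ≤ r′ ≤ 1, g(r) ≤ g(r′). -/
/-!
With `x = √r`, `a = sin θ₂` and `b = sin θ₁` (so `0 ≤ a ≤ b ≤ 1`), the function becomes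
`arcsin (b x) - arcsin (a x)`. Its derivative `b arcsin' (b x) - a arcsin' (a x)` is nonnegative
on `[0, 1)` because `arcsin' y = 1 / √(1 - y²)` is nonnegative and increasing there.
-/

open Real Set

lemma one_div_sqrt_one_sub_sq_le {y z : ℝ} (hy : 0 ≤ y) (hyz : y ≤ z) (hz : z < 1) :
    1 / √(1 - y ^ 2) ≤ 1 / √(1 - z ^ 2) :=
  one_div_le_one_div_of_le (sqrt_pos.2 (by nlinarith)) (sqrt_le_sqrt (by nlinarith))

lemma hasDerivAt_arcsin_const_mul {c x : ℝ} (h₁ : c * x ≠ -1) (h₂ : c * x ≠ 1) :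
    HasDerivAt (fun y => arcsin (c * y)) (1 / √(1 - (c * x) ^ 2) * c) x := by
  simpa [Function.comp_def] using (hasDerivAt_arcsin h₁ h₂).comp x ((hasDerivAt_id x).const_mul c)

lemma monotoneOn_arcsin_mul_sub_arcsin_mul {a b : ℝ} (ha : 0 ≤ a) (hab : a ≤ b) (hb : b ≤ 1) :
    MonotoneOn (fun x => arcsin (b * x) - arcsin (a * x)) (Icc 0 1) := by
  refine monotoneOn_of_hasDerivWithinAt_nonneg
    (f' := fun x => 1 / √(1 - (b * x) ^ 2) * b - 1 / √(1 - (a * x) ^ 2) * a)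
    (convex_Icc 0 1) (by fun_prop) (fun x hx => ?_) (fun x hx => ?_)
  all_goals
    rw [interior_Icc] at hx
    obtain ⟨hx₀, hx₁⟩ := hx
    have hax : a * x ≤ b * x := by nlinarith
    have hbx : b * x < 1 := by nlinarith
  · exact ((hasDerivAt_arcsin_const_mul (by nlinarith) hbx.ne).sub
      (hasDerivAt_arcsin_const_mul (by nlinarith) (by linarith))).hasDerivWithinAt
  · rw [sub_nonneg]
    exact mul_le_mul (one_div_sqrt_one_sub_sq_le (by positivity) hax hbx) hab ha (by positivity)

lemma sqrt_mul_sin_sq {θ : ℝ} (hθ₀ : 0 ≤ θ) (hθ : θ ≤ π) (r : ℝ) :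
    √(r * sin θ ^ 2) = sin θ * √r := by
  rw [sqrt_mul' r (sq_nonneg _), sqrt_sq (sin_nonneg_of_nonneg_of_le_pi hθ₀ hθ), mul_comm]

theorem arcsin_sqrt_diff_monotone
    (θ₁ θ₂ : ℝ)
    (hθ₂ : 0 ≤ θ₂) (h₂₁ : θ₂ ≤ θ₁) (hθ₁ : θ₁ ≤ π / 2) :
    ∀ r r' : ℝ, 0 ≤ r → r ≤ r' → r' ≤ 1 →
      arcsin (Real.sqrt (r * (Real.sin θ₁) ^ 2)) -
        arcsin (Real.sqrt (r * (Real.sin θ₂) ^ 2)) ≤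
      arcsin (Real.sqrt (r' * (Real.sin θ₁) ^ 2)) -
        arcsin (Real.sqrt (r' * (Real.sin θ₂) ^ 2)) := by
  intro r r' _ hrr' hr'
  have hπ := pi_pos
  have hsin₂ : 0 ≤ sin θ₂ := sin_nonneg_of_nonneg_of_le_pi hθ₂ (by linarith)
  have hsin : sin θ₂ ≤ sin θ₁ := sin_le_sin_of_le_of_le_pi_div_two (by linarith) hθ₁ h₂₁
  simp only [sqrt_mul_sin_sq (θ := θ₁) (by linarith) (by linarith),
    sqrt_mul_sin_sq (θ := θ₂) hθ₂ (by linarith)]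
  exact monotoneOn_arcsin_mul_sub_arcsin_mul hsin₂ hsin (sin_le_one θ₁)
    ⟨sqrt_nonneg r, sqrt_le_one.2 (hrr'.trans hr')⟩ ⟨sqrt_nonneg r', sqrt_le_one.2 hr'⟩
    (sqrt_le_sqrt hrr')
end

section
/- Let δ be a real number with 0 < δ < 1, and define f(x) = arcsin √(x+δ) − arcsin √x for x ∈ [0, 1−δ]. Then f is antitone (nonincreasing) on [0, (1−δ)/2] and monotone (nondecreasing) on [(1−δ)/2, 1−δ]; moreover f(0) = f(1−δ) = arcsin √δ. In particular, f(x) ≤ arcsin √δ for all x ∈ [0, 1−δ]. -/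
/-!
By the subtraction formula for `sin`, `arcsin √(x + δ) - arcsin √x = arcsin (√(q + δ) - √q)` with
`q = x (1 - δ - x)`. The increment `√(q + δ) - √q` decreases in `q ≥ 0`, and `q` increases on
`[0, (1 - δ)/2]`, decreases on `[(1 - δ)/2, 1 - δ]` and vanishes at both endpoints, where the
difference is therefore `arcsin √δ`, its maximum.
-/

open Real

theorem antitoneOn_sqrt_add_sub_sqrt {δ : ℝ} (hδ : 0 ≤ δ) :
    AntitoneOn (fun t => √(t + δ) - √t) (Set.Ici 0) := by
  intro s (hs : 0 ≤ s) t _ hst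
  suffices √(t + δ) + √s ≤ √(s + δ) + √t by simp only; linarith
  have hprod : √((t + δ) * s) ≤ √((s + δ) * t) :=
    sqrt_le_sqrt (by nlinarith [mul_le_mul_of_nonneg_left hst hδ])
  rw [sqrt_mul (by linarith), sqrt_mul (by linarith)] at hprod
  refine (pow_le_pow_iff_left₀ (by positivity) (by positivity) two_ne_zero).1 ?_
  nlinarith [sq_sqrt (show 0 ≤ t + δ by linarith), sq_sqrt (show 0 ≤ s + δ by linarith),
    sq_sqrt hs, sq_sqrt (hs.trans hst)]

theorem arcsin_sub_arcsin {a b : ℝ} (ha₀ : 0 ≤ a) (ha₁ : a ≤ 1) (hb₀ : 0 ≤ b) (hb₁ : b ≤ 1) :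
    arcsin b - arcsin a = arcsin (b * √(1 - a ^ 2) - √(1 - b ^ 2) * a) := by
  have ha_le := arcsin_le_pi_div_two a
  have hb_le := arcsin_le_pi_div_two b
  have ha_nonneg := arcsin_nonneg.2 ha₀
  have hb_nonneg := arcsin_nonneg.2 hb₀
  rw [← arcsin_sin (x := arcsin b - arcsin a) (by linarith) (by linarith), sin_sub,
    sin_arcsin (by linarith) hb₁, sin_arcsin (by linarith) ha₁, cos_arcsin, cos_arcsin]

theorem arcsin_sqrt_add_sub_arcsin_sqrt {x δ : ℝ} (hx : 0 ≤ x) (hδ : 0 ≤ δ) (h : x + δ ≤ 1) :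
    arcsin √(x + δ) - arcsin √x = arcsin (√(x * (1 - δ - x) + δ) - √(x * (1 - δ - x))) := by
  rw [arcsin_sub_arcsin (sqrt_nonneg _) (sqrt_le_one.2 (by linarith)) (sqrt_nonneg _)
    (sqrt_le_one.2 h), sq_sqrt hx, sq_sqrt (by linarith), ← sqrt_mul (by linarith),
    ← sqrt_mul (by linarith)]
  congr 3 <;> ring

theorem arcsin_sqrt_shift_monotonicity
    (δ : ℝ) (hδ : 0 < δ) (hδ' : δ < 1) :
    AntitoneOn (fun x : ℝ => arcsin (Real.sqrt (x + δ)) - arcsin (Real.sqrt x))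
      (Set.Icc 0 ((1 - δ) / 2)) ∧
    MonotoneOn (fun x : ℝ => arcsin (Real.sqrt (x + δ)) - arcsin (Real.sqrt x))
      (Set.Icc ((1 - δ) / 2) (1 - δ)) ∧
    arcsin (Real.sqrt (0 + δ)) - arcsin (Real.sqrt 0) = arcsin (Real.sqrt δ) ∧
    arcsin (Real.sqrt ((1 - δ) + δ)) - arcsin (Real.sqrt (1 - δ)) = arcsin (Real.sqrt δ) ∧
    ∀ x ∈ Set.Icc (0 : ℝ) (1 - δ),
      arcsin (Real.sqrt (x + δ)) - arcsin (Real.sqrt x) ≤ arcsin (Real.sqrt δ) := by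
  have hrep : ∀ x ∈ Set.Icc 0 (1 - δ), arcsin √(x + δ) - arcsin √x =
      arcsin (√(x * (1 - δ - x) + δ) - √(x * (1 - δ - x))) := fun x hx =>
    arcsin_sqrt_add_sub_arcsin_sqrt hx.1 hδ.le (by linarith [hx.2])
  have hanti : AntitoneOn (fun q => arcsin (√(q + δ) - √q)) (Set.Ici 0) :=
    monotone_arcsin.comp_antitoneOn (antitoneOn_sqrt_add_sub_sqrt hδ.le)
  have hprod_nonneg : ∀ x ∈ Set.Icc 0 (1 - δ), 0 ≤ x * (1 - δ - x) := fun x hx =>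
    mul_nonneg hx.1 (by linarith [hx.2])
  refine ⟨?_, ?_, by simp, ?_, ?_⟩
  · intro x hx y hy hxy
    have hx' : x ∈ Set.Icc 0 (1 - δ) := ⟨hx.1, by linarith [hx.2]⟩
    have hy' : y ∈ Set.Icc 0 (1 - δ) := ⟨hy.1, by linarith [hy.2]⟩
    simp only [hrep x hx', hrep y hy']
    exact hanti (hprod_nonneg x hx') (hprod_nonneg y hy') (by nlinarith [hx.1, hy.2])
  · intro x hx y hy hxy
    have hx' : x ∈ Set.Icc 0 (1 - δ) := ⟨by linarith [hx.1], hx.2⟩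
    have hy' : y ∈ Set.Icc 0 (1 - δ) := ⟨by linarith [hy.1], hy.2⟩
    simp only [hrep x hx', hrep y hy']
    exact hanti (hprod_nonneg y hy') (hprod_nonneg x hx') (by nlinarith [hx.1, hy.2])
  · rw [hrep (1 - δ) ⟨by linarith, le_rfl⟩]
    simp
  · intro x hx
    rw [hrep x hx]
    simpa using hanti Set.self_mem_Ici (hprod_nonneg x hx) (hprod_nonneg x hx)
end

section
/- Let m be a natural number, k an even integer with 0 ≤ k ≤ 2m, and y a real number with 0 ≤ y ≤ 1. Then φ = (arcsin √y + k·π/2)/(2m+1) is the unique real number in the interval [ (k/(2m+1))·(π/2), ((k+1)/(2m+1))·(π/2) ] satisfying sin²((2m+1)·φ) = y. -/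
/-! Write `N = 2m + 1` and `k = 2j`. The affine map `φ ↦ Nφ - kπ/2` carries the `k`-th period
onto `[0, π/2]`, and since `sin` is antiperiodic with antiperiod `π`, `sin²` is unchanged by
the shift `kπ/2 = jπ`. The equation therefore becomes `sin² t = y` with `t ∈ [0, π/2]`, where
`sin` is nonnegative and injective, so its only solution is `t = arcsin √y`. -/

open Real

theorem Real.sin_sq_add_int_mul_pi (t : ℝ) (j : ℤ) : sin (t + j * π) ^ 2 = sin t ^ 2 := by
  simpa only [sq, Pi.mul_apply] using (sin_antiperiodic.mul sin_antiperiodic).int_mul j t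

theorem Real.sin_sq_arcsin_sqrt {y : ℝ} (hy0 : 0 ≤ y) (hy1 : y ≤ 1) :
    sin (arcsin (√y)) ^ 2 = y := by
  rw [sin_arcsin (by linarith [sqrt_nonneg y]) (sqrt_le_one.2 hy1), sq_sqrt hy0]

theorem Real.eq_arcsin_sqrt_of_sin_sq_eq {t y : ℝ} (ht0 : 0 ≤ t) (ht1 : t ≤ π / 2)
    (hty : sin t ^ 2 = y) : t = arcsin (√y) := by
  have hsin_nonneg : 0 ≤ sin t := sin_nonneg_of_nonneg_of_le_pi ht0 (by linarith [pi_pos])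
  rw [← hty, sqrt_sq hsin_nonneg, arcsin_sin (by linarith [pi_pos]) ht1]

theorem mem_Icc_div_mul_iff_sub_mem_Icc {N : ℝ} (hN : 0 < N) (c L φ : ℝ) :
    φ ∈ Set.Icc (c / N * L) ((c + 1) / N * L) ↔ N * φ - c * L ∈ Set.Icc 0 L := by
  simp only [Set.mem_Icc, div_mul_eq_mul_div, div_le_iff₀ hN, le_div_iff₀ hN]
  constructor <;> rintro ⟨h₁, h₂⟩ <;> constructor <;> linarith

theorem sin_sq_eq_unique_solution_even_period_general
    (m : ℕ) (k : ℤ) (hke : Even k)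
    (y : ℝ) (hy0 : 0 ≤ y) (hy1 : y ≤ 1) :
    (arcsin (Real.sqrt y) + (k : ℝ) * π / 2) / (2 * m + 1) ∈
      Set.Icc (((k : ℝ) / (2 * m + 1)) * (π / 2))
        ((((k : ℝ) + 1) / (2 * m + 1)) * (π / 2)) ∧
    (Real.sin ((2 * m + 1) *
        ((arcsin (Real.sqrt y) + (k : ℝ) * π / 2) / (2 * m + 1)))) ^ 2 = y ∧
    ∀ φ ∈ Set.Icc (((k : ℝ) / (2 * m + 1)) * (π / 2))
        ((((k : ℝ) + 1) / (2 * m + 1)) * (π / 2)),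
      (Real.sin ((2 * m + 1) * φ)) ^ 2 = y →
        φ = (arcsin (Real.sqrt y) + (k : ℝ) * π / 2) / (2 * m + 1) := by
  obtain ⟨j, hj⟩ := hke
  have hN : (0 : ℝ) < 2 * m + 1 := by positivity
  have hshift (t : ℝ) : sin (t + k * π / 2) ^ 2 = sin t ^ 2 := by
    rw [show (k : ℝ) * π / 2 = j * π by rw [hj]; push_cast; ring, sin_sq_add_int_mul_pi]
  have hperiod (φ : ℝ) :
      φ ∈ Set.Icc (k / (2 * m + 1) * (π / 2)) ((k + 1) / (2 * m + 1) * (π / 2)) ↔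
        (2 * m + 1) * φ - k * π / 2 ∈ Set.Icc 0 (π / 2) := by
    simpa only [mul_div_assoc] using mem_Icc_div_mul_iff_sub_mem_Icc hN k (π / 2) φ
  have hcancel := mul_div_cancel₀ (arcsin √y + k * π / 2) hN.ne'
  refine ⟨?_, ?_, fun φ hφ hsin => ?_⟩
  · rw [hperiod, hcancel, add_sub_cancel_right]
    exact ⟨arcsin_nonneg.2 (sqrt_nonneg y), arcsin_le_pi_div_two _⟩
  · rw [hcancel, hshift, sin_sq_arcsin_sqrt hy0 hy1]
  · rw [hperiod] at hφ
    have ht := eq_arcsin_sqrt_of_sin_sq_eq (y := y) hφ.1 hφ.2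
      (by rwa [← hshift, sub_add_cancel])
    rw [eq_div_iff hN.ne', ← ht]
    ring

theorem sin_sq_eq_unique_solution_even_period
    (m : ℕ) (k : ℤ) (hk0 : 0 ≤ k) (hk : k ≤ 2 * m) (hke : Even k)
    (y : ℝ) (hy0 : 0 ≤ y) (hy1 : y ≤ 1) :
    (arcsin (Real.sqrt y) + (k : ℝ) * π / 2) / (2 * m + 1) ∈
      Set.Icc (((k : ℝ) / (2 * m + 1)) * (π / 2))
        ((((k : ℝ) + 1) / (2 * m + 1)) * (π / 2)) ∧
    (Real.sin ((2 * m + 1) *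
        ((arcsin (Real.sqrt y) + (k : ℝ) * π / 2) / (2 * m + 1)))) ^ 2 = y ∧
    ∀ φ ∈ Set.Icc (((k : ℝ) / (2 * m + 1)) * (π / 2))
        ((((k : ℝ) + 1) / (2 * m + 1)) * (π / 2)),
      (Real.sin ((2 * m + 1) * φ)) ^ 2 = y →
        φ = (arcsin (Real.sqrt y) + (k : ℝ) * π / 2) / (2 * m + 1) :=
  sin_sq_eq_unique_solution_even_period_general m k hke y hy0 hy1
end

section
/- Let m be a natural number, k an odd integer with 0 ≤ k ≤ 2m, and L, U real numbers with 0 ≤ L ≤ U ≤ 1. For every real number θ in the interval [ (k/(2m+1))·(π/2), ((k+1)/(2m+1))·(π/2) ], one has sin²((2m+1)·θ) ∈ [L, U] if and only if θ ∈ [ (−arcsin √U + (k+1)·π/2)/(2m+1), (−arcsin √L + (k+1)·π/2)/(2m+1) ]. -/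
/-!
Put `x = (k + 1)π/2 - (2m + 1)θ`. On the `k`-th period `x` ranges over `[0, π/2]`, and since
`k` is odd, `(k + 1)π/2` is a multiple of `π`, so `sin² ((2m + 1)θ) = sin² x`. On `[0, π/2]` the
sine is nonnegative and increasing, hence `sin² x ∈ [L, U]` iff `x ∈ [arcsin √L, arcsin √U]`.
-/

open Real

theorem sin_sq_int_mul_pi_sub (j : ℤ) (x : ℝ) : sin (j * π - x) ^ 2 = sin x ^ 2 := by
  rw [sin_int_mul_pi_sub, neg_sq, mul_pow, ← zpow_natCast, ← zpow_mul, mul_comm (j : ℤ), zpow_mul]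
  norm_num

theorem sin_sq_le_iff_le_arcsin_sqrt {x t : ℝ} (hx₀ : 0 ≤ x) (hx : x ≤ π / 2) (ht : 0 ≤ t) :
    sin x ^ 2 ≤ t ↔ x ≤ arcsin √t := by
  rw [le_arcsin_iff_sin_le' ⟨by linarith [pi_pos], hx⟩,
    le_sqrt (sin_nonneg_of_nonneg_of_le_pi hx₀ (by linarith [pi_pos])) ht]

theorem le_sin_sq_iff_arcsin_sqrt_le {x t : ℝ} (hx₀ : 0 ≤ x) (hx : x ≤ π / 2) (ht : t ≤ 1) :
    t ≤ sin x ^ 2 ↔ arcsin √t ≤ x := by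
  rw [arcsin_le_iff_le_sin ⟨by linarith [sqrt_nonneg t], sqrt_le_one.mpr ht⟩
      ⟨by linarith [pi_pos], hx⟩,
    sqrt_le_left (sin_nonneg_of_nonneg_of_le_pi hx₀ (by linarith [pi_pos]))]

theorem mem_Icc_sub_div_iff {n : ℝ} (hn : 0 < n) (a b c θ : ℝ) :
    θ ∈ Set.Icc ((c - b) / n) ((c - a) / n) ↔ c - n * θ ∈ Set.Icc a b := by
  simp only [Set.mem_Icc, div_le_iff₀ hn, le_div_iff₀ hn]
  constructor <;> rintro ⟨h₁, h₂⟩ <;> constructor <;> linarith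

theorem sin_sq_mem_Icc_iff_odd_period_general
    (m : ℕ) (k : ℤ) (hko : Odd k)
    (L U : ℝ) (hL : 0 ≤ L) (hLU : L ≤ U) (hU : U ≤ 1) :
    ∀ θ ∈ Set.Icc (((k : ℝ) / (2 * m + 1)) * (π / 2))
        ((((k : ℝ) + 1) / (2 * m + 1)) * (π / 2)),
      ((Real.sin ((2 * m + 1) * θ)) ^ 2 ∈ Set.Icc L U ↔
        θ ∈ Set.Icc ((-arcsin (Real.sqrt U) + ((k : ℝ) + 1) * π / 2) / (2 * m + 1))
          ((-arcsin (Real.sqrt L) + ((k : ℝ) + 1) * π / 2) / (2 * m + 1))) := by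
  intro θ hθ
  have hn : (0 : ℝ) < 2 * m + 1 := by positivity
  obtain ⟨j, rfl⟩ := hko
  set c : ℝ := ((2 * j + 1 : ℤ) + 1) * π / 2
  have hc : c = (j + 1 : ℤ) * π := by simp only [c]; push_cast; ring
  have hx : c - (2 * m + 1) * θ ∈ Set.Icc 0 (π / 2) := by
    rw [← mem_Icc_sub_div_iff hn]
    convert hθ using 2 <;> ring
  have hsin : sin ((2 * m + 1) * θ) ^ 2 = sin (c - (2 * m + 1) * θ) ^ 2 := by
    rw [hc, sin_sq_int_mul_pi_sub]
  rw [hsin, neg_add_eq_sub, neg_add_eq_sub, mem_Icc_sub_div_iff hn, Set.mem_Icc, Set.mem_Icc,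
    le_sin_sq_iff_arcsin_sqrt_le hx.1 hx.2 (hLU.trans hU),
    sin_sq_le_iff_le_arcsin_sqrt hx.1 hx.2 (hL.trans hLU)]

theorem sin_sq_mem_Icc_iff_odd_period
    (m : ℕ) (k : ℤ) (hk0 : 0 ≤ k) (hk : k ≤ 2 * m) (hko : Odd k)
    (L U : ℝ) (hL : 0 ≤ L) (hLU : L ≤ U) (hU : U ≤ 1) :
    ∀ θ ∈ Set.Icc (((k : ℝ) / (2 * m + 1)) * (π / 2))
        ((((k : ℝ) + 1) / (2 * m + 1)) * (π / 2)),
      ((Real.sin ((2 * m + 1) * θ)) ^ 2 ∈ Set.Icc L U ↔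
        θ ∈ Set.Icc ((-arcsin (Real.sqrt U) + ((k : ℝ) + 1) * π / 2) / (2 * m + 1))
          ((-arcsin (Real.sqrt L) + ((k : ℝ) + 1) * π / 2) / (2 * m + 1))) :=
  sin_sq_mem_Icc_iff_odd_period_general m k hko L U hL hLU hU
end

section
/- Let m be a natural number, k an integer with 0 ≤ k ≤ 2m, and a, b real numbers with 0 ≤ a ≤ b ≤ π/2 and b − a ≤ (1/(2m+1))·(π/2). Let r be a real number with 0 < r ≤ 1 such that arcsin √(r·sin²b) = ((k+1)/(2m+1))·(π/2). Then the interval [ arcsin √(r·sin²a), arcsin √(r·sin²b) ] is contained in [ (k/(2m+1))·(π/2), ((k+1)/(2m+1))·(π/2) ]. (This is the key property of the paper's adjustment factor: after rescaling the amplitude by r, the confidence interval lies in a single period.) -/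
/-!
Since `θ ↦ arcsin (c * sin θ)` with `|c| ≤ 1` never increases faster than `θ`, the endpoint
`arcsin √(r sin² a) = arcsin (√r sin a)` lies within `b - a`, hence within one period length,
below `arcsin √(r sin² b)`, which is the upper end of the `k`-th period.
-/

open Real

lemma mul_cos_le_cos_arcsin_mul_sin {c : ℝ} (hc : |c| ≤ 1) (θ : ℝ) :
    c * cos θ ≤ cos (arcsin (c * sin θ)) := by
  rw [cos_arcsin]
  refine (le_abs_self _).trans (abs_le_sqrt ?_)
  have hc2 : c ^ 2 ≤ 1 := (sq_le_one_iff_abs_le_one c).2 hc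
  nlinarith [sin_sq_add_cos_sq θ, sq_nonneg (sin θ)]

lemma arcsin_mul_sin_sub_le {c : ℝ} (hc : |c| ≤ 1) {a b : ℝ} (hab : a ≤ b) :
    arcsin (c * sin b) - arcsin (c * sin a) ≤ b - a := by
  set A := arcsin (c * sin b)
  by_cases hlow : A - (b - a) ≤ -(π / 2)
  · linarith [neg_pi_div_two_le_arcsin (c * sin a)]
  have hA : A - (b - a) ∈ Set.Ioc (-(π / 2)) (π / 2) :=
    ⟨not_le.1 hlow, by linarith [arcsin_le_pi_div_two (c * sin b)]⟩
  have hsin_d : 0 ≤ sin (b - a) :=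
    sin_nonneg_of_nonneg_of_le_pi (by linarith) (by linarith [arcsin_le_pi_div_two (c * sin b)])
  have hcs : |c * sin b| ≤ 1 := by
    rw [abs_mul]; exact mul_le_one₀ hc (abs_nonneg _) (abs_sin_le_one b)
  have hsin_A : sin A = c * sin b := sin_arcsin (abs_le.1 hcs).1 (abs_le.1 hcs).2
  have hsin_a : sin a = sin b * cos (b - a) - cos b * sin (b - a) := by
    rw [← sin_sub, sub_sub_cancel]
  -- with `d = b - a`: `sin (A - d) = c sin b cos d - cos A sin d ≤ c sin b cos d - c cos b sin d = c sin a`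
  suffices A - (b - a) ≤ arcsin (c * sin a) by linarith
  rw [le_arcsin_iff_sin_le' hA, sin_sub, hsin_A, hsin_a]
  linarith [mul_le_mul_of_nonneg_right (mul_cos_le_cos_arcsin_mul_sin hc b) hsin_d]

theorem adjusted_interval_subset_single_period_general
    (m : ℕ) (k : ℤ)
    (a b : ℝ) (ha : 0 ≤ a) (hab : a ≤ b) (hb : b ≤ π / 2)
    (hlen : b - a ≤ (1 / (2 * m + 1)) * (π / 2))
    (r : ℝ) (hr0 : 0 < r) (hr1 : r ≤ 1)
    (hadj : arcsin (Real.sqrt (r * (Real.sin b) ^ 2)) =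
      (((k : ℝ) + 1) / (2 * m + 1)) * (π / 2)) :
    Set.Icc (arcsin (Real.sqrt (r * (Real.sin a) ^ 2)))
        (arcsin (Real.sqrt (r * (Real.sin b) ^ 2))) ⊆
      Set.Icc (((k : ℝ) / (2 * m + 1)) * (π / 2))
        ((((k : ℝ) + 1) / (2 * m + 1)) * (π / 2)) := by
  have hsqrt : ∀ θ, 0 ≤ θ → θ ≤ π / 2 → √(r * sin θ ^ 2) = √r * sin θ := fun θ h0 h1 => by
    rw [Real.sqrt_mul hr0.le, Real.sqrt_sq (sin_nonneg_of_nonneg_of_le_pi h0 (by linarith))]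
  have hc : |√r| ≤ 1 := by rw [abs_of_nonneg (Real.sqrt_nonneg r)]; exact Real.sqrt_le_one.2 hr1
  have key : arcsin √(r * sin b ^ 2) - arcsin √(r * sin a ^ 2) ≤ b - a := by
    rw [hsqrt a ha (hab.trans hb), hsqrt b (ha.trans hab) hb]
    exact arcsin_mul_sin_sub_le hc hab
  have hperiod : ((k : ℝ) / (2 * m + 1)) * (π / 2) =
      (((k : ℝ) + 1) / (2 * m + 1)) * (π / 2) - (1 / (2 * m + 1)) * (π / 2) := by ring
  intro x hx
  exact ⟨by linarith [hx.1], hx.2.trans hadj.le⟩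

theorem adjusted_interval_subset_single_period
    (m : ℕ) (k : ℤ) (hk0 : 0 ≤ k) (hk : k ≤ 2 * m)
    (a b : ℝ) (ha : 0 ≤ a) (hab : a ≤ b) (hb : b ≤ π / 2)
    (hlen : b - a ≤ (1 / (2 * m + 1)) * (π / 2))
    (r : ℝ) (hr0 : 0 < r) (hr1 : r ≤ 1)
    (hadj : arcsin (Real.sqrt (r * (Real.sin b) ^ 2)) =
      (((k : ℝ) + 1) / (2 * m + 1)) * (π / 2)) :
    Set.Icc (arcsin (Real.sqrt (r * (Real.sin a) ^ 2)))
        (arcsin (Real.sqrt (r * (Real.sin b) ^ 2))) ⊆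
      Set.Icc (((k : ℝ) / (2 * m + 1)) * (π / 2))
        ((((k : ℝ) + 1) / (2 * m + 1)) * (π / 2)) :=
  adjusted_interval_subset_single_period_general m k a b ha hab hb hlen r hr0 hr1 hadj
end

section
/- Let E be an inner product space over ℂ, and let e₀, e₁ ∈ E be orthonormal vectors (i.e., ‖e₀‖ = ‖e₁‖ = 1 and ⟪e₀, e₁⟫ = 0). Let θ be a real number and set ψ = (sin θ)·e₁ + (cos θ)·e₀. Define the maps S : E → E by S(x) = x − 2·⟪e₁, x⟫·e₁ (the sign flip on the good state) and R : E → E by R(x) = 2·⟪ψ, x⟫·ψ − x (the negated reflection about ψ), and let Q = R ∘ S be the Grover operator. Then for every natural number m, the m-fold iterate of Q applied to ψ satisfies Q^[m](ψ) = (sin((2m+1)·θ))·e₁ + (cos((2m+1)·θ))·e₀. -/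
/-! The vectors `state α = sin α • e₁ + cos α • e₀` form a circle in the plane spanned by the
orthonormal pair, with `⟪state α, state β⟫ = cos (β - α)`. On this circle `S` is the reflection
`α ↦ -α` and `R` the reflection `β ↦ 2θ - β` about `ψ = state θ`, so `Q = R ∘ S` is the rotation
`α ↦ α + 2θ`, and `Q^[m] ψ = state ((2m + 1)θ)`. -/

open Real

namespace Grover

variable (𝕜 : Type*) {E : Type*} [RCLike 𝕜] [NormedAddCommGroup E] [InnerProductSpace 𝕜 E]

noncomputable def state (e₀ e₁ : E) (α : ℝ) : E := (sin α : 𝕜) • e₁ + (cos α : 𝕜) • e₀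

variable {𝕜} {e₀ e₁ : E}

theorem inner_left_state (he₁ : ‖e₁‖ = 1) (h₁₀ : inner 𝕜 e₁ e₀ = 0) (α : ℝ) :
    inner 𝕜 e₁ (state 𝕜 e₀ e₁ α) = sin α := by
  simp only [state, inner_add_right, inner_smul_right, inner_self_eq_one_of_norm_eq_one he₁, h₁₀,
    mul_one, mul_zero, add_zero]

theorem inner_state_state (he₀ : ‖e₀‖ = 1) (he₁ : ‖e₁‖ = 1) (h₀₁ : inner 𝕜 e₀ e₁ = 0)
    (α β : ℝ) : inner 𝕜 (state 𝕜 e₀ e₁ α) (state 𝕜 e₀ e₁ β) = cos (β - α) := by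
  have h₁₀ : inner 𝕜 e₁ e₀ = 0 := inner_eq_zero_symm.mp h₀₁
  simp only [state, inner_add_left, inner_add_right, inner_smul_left, inner_smul_right,
    inner_self_eq_one_of_norm_eq_one he₀, inner_self_eq_one_of_norm_eq_one he₁, h₀₁, h₁₀,
    RCLike.conj_ofReal, cos_sub]
  push_cast
  ring

theorem state_sub_two_inner_smul (he₁ : ‖e₁‖ = 1) (h₁₀ : inner 𝕜 e₁ e₀ = 0) (α : ℝ) :
    state 𝕜 e₀ e₁ α - (2 * inner 𝕜 e₁ (state 𝕜 e₀ e₁ α)) • e₁ = state 𝕜 e₀ e₁ (-α) := by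
  rw [inner_left_state he₁ h₁₀, state, state, sin_neg, cos_neg]
  push_cast
  module

theorem two_inner_smul_state_sub (he₀ : ‖e₀‖ = 1) (he₁ : ‖e₁‖ = 1) (h₀₁ : inner 𝕜 e₀ e₁ = 0)
    (θ β : ℝ) :
    (2 * inner 𝕜 (state 𝕜 e₀ e₁ θ) (state 𝕜 e₀ e₁ β)) • state 𝕜 e₀ e₁ θ - state 𝕜 e₀ e₁ β
      = state 𝕜 e₀ e₁ (2 * θ - β) := by
  have hsin : sin (2 * θ - β) = 2 * sin θ * cos (β - θ) - sin β := by
    rw [two_mul_sin_mul_cos]; ring_nf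
  have hcos : cos (2 * θ - β) = 2 * cos θ * cos (β - θ) - cos β := by
    rw [two_mul_cos_mul_cos]; ring_nf
  rw [inner_state_state he₀ he₁ h₀₁, state, state, state, hsin, hcos]
  push_cast
  module

end Grover

theorem grover_iterate
    {E : Type*} [NormedAddCommGroup E] [InnerProductSpace ℂ E]
    (e₀ e₁ : E) (he₀ : ‖e₀‖ = 1) (he₁ : ‖e₁‖ = 1)
    (horth : (inner ℂ e₀ e₁ : ℂ) = 0)
    (θ : ℝ)
    (ψ : E) (hψ : ψ = ((Real.sin θ : ℂ)) • e₁ + ((Real.cos θ : ℂ)) • e₀)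
    (S : E → E) (hS : ∀ x, S x = x - (2 * (inner ℂ e₁ x : ℂ)) • e₁)
    (R : E → E) (hR : ∀ x, R x = (2 * (inner ℂ ψ x : ℂ)) • ψ - x)
    (Q : E → E) (hQ : Q = R ∘ S) :
    ∀ m : ℕ,
      Q^[m] ψ = ((Real.sin ((2 * m + 1) * θ) : ℂ)) • e₁ +
        ((Real.cos ((2 * m + 1) * θ) : ℂ)) • e₀ := by
  have hψ : ψ = Grover.state ℂ e₀ e₁ θ := hψ
  have hQ_state (α : ℝ) : Q (Grover.state ℂ e₀ e₁ α) = Grover.state ℂ e₀ e₁ (α + 2 * θ) := by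
    rw [hQ, Function.comp_apply, hS,
      Grover.state_sub_two_inner_smul he₁ (inner_eq_zero_symm.mp horth), hR, hψ,
      Grover.two_inner_smul_state_sub he₀ he₁ horth]
    ring_nf
  intro m
  show Q^[m] ψ = Grover.state ℂ e₀ e₁ ((2 * m + 1) * θ)
  induction m with
  | zero => simp [hψ]
  | succ n ih =>
    rw [Function.iterate_succ_apply', ih, hQ_state]
    push_cast
    ring_nf
end

section
/- Let (Ω, ℱ, P) be a probability space and let Z₁, Z₂, … be independent, identically distributed random variables taking values in {0, 1} with P(Zᵢ = 1) = q for some q ∈ [0,1]. Let N be a positive integer, T a natural number, and α ∈ (0,1). For each positive integer j define η_j = √( log( (π²·(T+1)/(3α))·j² ) / (2·j·N) ). Then P( ∃ j ∈ {1, 2, …} such that | (1/(j·N))·Σ_{i=1}^{j·N} Zᵢ − q | ≥ η_j ) ≤ α/(T+1). -/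
/-!
The `jN`-sample mean of the `{0,1}`-valued variables is the mean of independent `1/4`-sub-Gaussian
variables, so Hoeffding's inequality bounds the probability that it misses `q` by `η_j` by
`2 exp (-2 j N η_j²) = (6 α / (π² (T + 1))) / j²`. A union bound over `j` and `∑ 1 / j² = π² / 6`
finish the proof.
-/

open Real MeasureTheory ProbabilityTheory Finset

namespace ProbabilityTheory

variable {Ω : Type*} [MeasurableSpace Ω] {μ : Measure Ω}

lemma HasSubgaussianMGF.measureReal_abs_ge_le {X : Ω → ℝ} {c : NNReal}
    (h : HasSubgaussianMGF X c μ) {ε : ℝ} (hε : 0 ≤ ε) :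
    μ.real {ω | ε ≤ |X ω|} ≤ 2 * exp (-ε ^ 2 / (2 * c)) := by
  calc μ.real {ω | ε ≤ |X ω|} = μ.real ({ω | ε ≤ X ω} ∪ {ω | ε ≤ (-X) ω}) := by
        congr 1; ext ω; simp [le_abs]
    _ ≤ μ.real {ω | ε ≤ X ω} + μ.real {ω | ε ≤ (-X) ω} := measureReal_union_le _ _
    _ ≤ 2 * exp (-ε ^ 2 / (2 * c)) := by
        linarith [h.measure_ge_le hε, h.neg.measure_ge_le hε]

/-- Hoeffding's inequality. -/
theorem measureReal_abs_sampleMean_sub_ge_le [IsProbabilityMeasure μ] {X : ℕ → Ω → ℝ}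
    (hindep : iIndepFun X μ) (hmeas : ∀ i, AEMeasurable (X i) μ) {a b m : ℝ}
    (hbdd : ∀ i, ∀ᵐ ω ∂μ, X i ω ∈ Set.Icc a b) (hmean : ∀ i, μ[X i] = m)
    {n : ℕ} (hn : 0 < n) {ε : ℝ} (hε : 0 ≤ ε) :
    μ.real {ω | ε ≤ |(1 / (n : ℝ)) * ∑ i ∈ range n, X i ω - m|} ≤
      2 * exp (-2 * n * ε ^ 2 / (b - a) ^ 2) := by
  have hn' : (0 : ℝ) < n := Nat.cast_pos.mpr hn
  have hsubG : ∀ i, HasSubgaussianMGF (fun ω ↦ X i ω - m) ((‖b - a‖₊ / 2) ^ 2) μ :=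
    fun i ↦ hmean i ▸ hasSubgaussianMGF_of_mem_Icc (hmeas i) (hbdd i)
  have hcentered : iIndepFun (fun i ω ↦ X i ω - m) μ :=
    hindep.comp (fun _ x ↦ x - m) fun _ ↦ measurable_sub_const m
  have hsum := (HasSubgaussianMGF.sum_of_iIndepFun hcentered
    (s := range n) fun i _ ↦ hsubG i).measureReal_abs_ge_le (mul_nonneg hn'.le hε)
  have hevent : {ω | ε ≤ |(1 / (n : ℝ)) * ∑ i ∈ range n, X i ω - m|} =
      {ω | n * ε ≤ |∑ i ∈ range n, (X i ω - m)|} := by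
    ext ω
    rw [Set.mem_ofPred_eq, Set.mem_ofPred_eq, sum_sub_distrib, sum_const, card_range,
      nsmul_eq_mul, ← mul_le_mul_iff_of_pos_left hn', ← abs_of_pos hn', ← abs_mul,
      abs_of_pos hn']
    field_simp
  rw [hevent]
  convert hsum using 3
  push_cast [sum_const, card_range, nsmul_eq_mul, coe_nnnorm, Real.norm_eq_abs]
  rw [div_pow, sq_abs]
  rcases eq_or_ne (b - a) 0 with hab | hab
  · simp [hab]
  · field_simp

lemma integral_eq_measureReal_of_forall_eq_zero_or_one {Z : Ω → ℝ} (hZ : Measurable Z)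
    (hval : ∀ ω, Z ω = 0 ∨ Z ω = 1) :
    μ[Z] = μ.real {ω | Z ω = 1} := by
  have hs : MeasurableSet {ω | Z ω = 1} := hZ (measurableSet_singleton 1)
  rw [← integral_indicator_one hs]
  congr 1; ext ω
  rcases hval ω with h | h <;> simp [h]

theorem measure_abs_sampleMean_sub_ge_sqrt_log_le [IsProbabilityMeasure μ] {Z : ℕ → Ω → ℝ}
    (hmeas : ∀ i, Measurable (Z i)) (hval : ∀ i ω, Z i ω = 0 ∨ Z i ω = 1)
    (hindep : iIndepFun Z μ) {q : ℝ} (hq0 : 0 ≤ q)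
    (hq : ∀ i, μ {ω | Z i ω = 1} = ENNReal.ofReal q) {n : ℕ} (hn : 0 < n) {K : ℝ} (hK : 1 ≤ K) :
    μ {ω | √(log K / (2 * n)) ≤ |(1 / (n : ℝ)) * ∑ i ∈ range n, Z i ω - q|} ≤
      ENNReal.ofReal (2 / K) := by
  have hmean : ∀ i, μ[Z i] = q := fun i ↦ by
    rw [integral_eq_measureReal_of_forall_eq_zero_or_one (hmeas i) (hval i), measureReal_def,
      hq i, ENNReal.toReal_ofReal hq0]
  have hbdd : ∀ i, ∀ᵐ ω ∂μ, Z i ω ∈ Set.Icc (0 : ℝ) 1 := fun i ↦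
    ae_of_all _ fun ω ↦ by rcases hval i ω with h | h <;> simp [h]
  have h := measureReal_abs_sampleMean_sub_ge_le hindep (fun i ↦ (hmeas i).aemeasurable)
    hbdd hmean hn (sqrt_nonneg (log K / (2 * n)))
  have hexponent : -2 * n * √(log K / (2 * n)) ^ 2 / (1 - 0) ^ 2 = -log K := by
    have : (0 : ℝ) < n := Nat.cast_pos.mpr hn
    rw [sq_sqrt (div_nonneg (log_nonneg hK) (by positivity)), sub_zero, one_pow, div_one]
    field_simp
  rw [hexponent, exp_neg, exp_log (by linarith), ← div_eq_mul_inv] at h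
  rw [← ofReal_measureReal]
  exact ENNReal.ofReal_le_ofReal h

end ProbabilityTheory

lemma ENNReal.tsum_ofReal_mul_one_div_sq {c : ℝ} (hc : 0 ≤ c) :
    ∑' j : ℕ, ENNReal.ofReal (c * (1 / (j : ℝ) ^ 2)) = ENNReal.ofReal (c * (π ^ 2 / 6)) := by
  have h := hasSum_zeta_two.mul_left c
  rw [← ENNReal.ofReal_tsum_of_nonneg (fun j ↦ by positivity) h.summable, h.tsum_eq]

theorem simultaneous_hoeffding_confidence_general
    {Ω : Type*} [MeasurableSpace Ω] (P : Measure Ω) [IsProbabilityMeasure P]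
    (Z : ℕ → Ω → ℝ) (hmeas : ∀ i, Measurable (Z i))
    (hval : ∀ i ω, Z i ω = 0 ∨ Z i ω = 1)
    (hindep : iIndepFun Z P)
    (q : ℝ) (hq0 : 0 ≤ q)
    (hq : ∀ i, P {ω | Z i ω = 1} = ENNReal.ofReal q)
    (N : ℕ) (hN : 0 < N) (T : ℕ) (α : ℝ) (hα0 : 0 < α) (hα1 : α < 1) :
    P {ω | ∃ j : ℕ, 0 < j ∧
        Real.sqrt (Real.log ((π ^ 2 * (T + 1) / (3 * α)) * (j : ℝ) ^ 2) /
            (2 * j * N)) ≤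
          |(1 / ((j : ℝ) * N)) * ∑ i ∈ Finset.range (j * N), Z i ω - q|} ≤
      ENNReal.ofReal (α / (T + 1)) := by
  set C : ℝ := π ^ 2 * (T + 1) / (3 * α)
  have hC : 1 ≤ C := by
    rw [le_div_iff₀ (by positivity)]
    nlinarith [pi_gt_three, (Nat.cast_nonneg T : (0 : ℝ) ≤ T)]
  set A : ℕ → Set Ω := fun j ↦ {ω | 0 < j ∧ √(log (C * (j : ℝ) ^ 2) / (2 * j * N)) ≤
    |(1 / ((j : ℝ) * N)) * ∑ i ∈ range (j * N), Z i ω - q|}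
  have hA : ∀ j, P (A j) ≤ ENNReal.ofReal (2 / C * (1 / (j : ℝ) ^ 2)) := by
    intro j
    rcases Nat.eq_zero_or_pos j with rfl | hj
    · simp [A]
    have hj1 : (1 : ℝ) ≤ j := Nat.one_le_cast.mpr hj
    have hbound := measure_abs_sampleMean_sub_ge_sqrt_log_le hmeas hval hindep hq0 hq
      (Nat.mul_pos hj hN) (K := C * j ^ 2) (by nlinarith)
    rw [show 2 / C * (1 / (j : ℝ) ^ 2) = 2 / (C * j ^ 2) by field_simp]
    refine le_trans (measure_mono fun ω hω ↦ ?_) hbound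
    simpa only [Set.mem_ofPred_eq, Nat.cast_mul, mul_assoc] using hω.2
  calc P {ω | ∃ j : ℕ, 0 < j ∧ √(log (C * (j : ℝ) ^ 2) / (2 * j * N)) ≤
          |(1 / ((j : ℝ) * N)) * ∑ i ∈ range (j * N), Z i ω - q|}
      = P (⋃ j, A j) := by congr 1; ext ω; simp [A]
    _ ≤ ∑' j, P (A j) := measure_iUnion_le A
    _ ≤ ∑' j : ℕ, ENNReal.ofReal (2 / C * (1 / (j : ℝ) ^ 2)) := ENNReal.tsum_le_tsum hA
    _ = ENNReal.ofReal (α / (T + 1)) := by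
        rw [ENNReal.tsum_ofReal_mul_one_div_sq (by positivity)]
        congr 1
        simp only [C]
        field_simp
        ring

theorem simultaneous_hoeffding_confidence
    {Ω : Type*} [MeasurableSpace Ω] (P : Measure Ω) [IsProbabilityMeasure P]
    (Z : ℕ → Ω → ℝ) (hmeas : ∀ i, Measurable (Z i))
    (hval : ∀ i ω, Z i ω = 0 ∨ Z i ω = 1)
    (hindep : iIndepFun Z P)
    (hid : ∀ i, IdentDistrib (Z i) (Z 0) P P)
    (q : ℝ) (hq0 : 0 ≤ q) (hq1 : q ≤ 1)
    (hq : ∀ i, P {ω | Z i ω = 1} = ENNReal.ofReal q)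
    (N : ℕ) (hN : 0 < N) (T : ℕ) (α : ℝ) (hα0 : 0 < α) (hα1 : α < 1) :
    P {ω | ∃ j : ℕ, 0 < j ∧
        Real.sqrt (Real.log ((π ^ 2 * (T + 1) / (3 * α)) * (j : ℝ) ^ 2) /
            (2 * j * N)) ≤
          |(1 / ((j : ℝ) * N)) * ∑ i ∈ Finset.range (j * N), Z i ω - q|} ≤
      ENNReal.ofReal (α / (T + 1)) :=
  simultaneous_hoeffding_confidence_general P Z hmeas hval hindep q hq0 hq N hN T α hα0 hα1
end
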